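/- arXiv:2410.22569 — 3 statements merged into one kernel-verified Lean document; each statement's English description precedes it below -/
import Mathlib

section
/- Let μ be a finite regular Borel measure on ℝ with inf supp μ = 0. Then liminf_{t→∞} (∫ e^{-tx} μ(dx)) / (∫ e^{-2tx} μ(dx))^{1/2} > 0 if and only if μ({0}) > 0. -/
/-!
Write `L t = ∫ e^{-tx} dμ`. By dominated convergence `L t → μ {0}` as `t → ∞`, which settles the
case of an atom at `0`. Without an atom `L t → 0`, while a positive liminf `δ` of the ratio gives
`δ² L (2t) ≤ L t²` for large `t`. Starting from a `t₀` with `L t₀ ≤ δ²/4`, repeated squaring yields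
`L (2ⁿ t₀) ≤ δ² 4^{-2ⁿ}`, a decay faster than `e^{-ε s}` for `ε = log 2 / t₀`. But
`L s ≥ e^{-ε s} μ [0, ε)` and `μ [0, ε) > 0` because `inf supp μ = 0`.
-/

open MeasureTheory Filter Topology Set

lemma le_pow_two_pow_of_le_sq {u : ℕ → ℝ} (hu_nonneg : ∀ n, 0 ≤ u n)
    (hu : ∀ n, u (n + 1) ≤ u n ^ 2) (n : ℕ) : u n ≤ u 0 ^ 2 ^ n := by
  induction n with
  | zero => simp
  | succ n ih =>
    calc u (n + 1) ≤ u n ^ 2 := hu n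
      _ ≤ (u 0 ^ 2 ^ n) ^ 2 := pow_le_pow_left₀ (hu_nonneg n) ih 2
      _ = u 0 ^ 2 ^ (n + 1) := by rw [← pow_mul, pow_succ]

lemma sq_mul_le_sq_of_lt_div_sqrt {a b δ : ℝ} (hδ : 0 ≤ δ) (hb : 0 ≤ b) (h : δ < a / √b) :
    δ ^ 2 * b ≤ a ^ 2 := by
  rcases hb.eq_or_lt with rfl | hb
  · simp [sq_nonneg]
  · have hlt : δ * √b < a := (lt_div_iff₀ (Real.sqrt_pos.2 hb)).1 h
    calc δ ^ 2 * b = (δ * √b) ^ 2 := by rw [mul_pow, Real.sq_sqrt hb.le]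
      _ ≤ a ^ 2 := pow_le_pow_left₀ (by positivity) hlt.le 2

lemma le_mul_div_pow_two_pow_of_mul_le_sq {g : ℝ → ℝ} {c t₀ : ℝ} (hc : 0 < c) (ht₀ : 0 ≤ t₀)
    (hg : ∀ s ≥ t₀, 0 ≤ g s) (hsq : ∀ s ≥ t₀, c * g (2 * s) ≤ g s ^ 2) (n : ℕ) :
    g (2 ^ n * t₀) ≤ c * (g t₀ / c) ^ 2 ^ n := by
  have hge : ∀ n : ℕ, t₀ ≤ 2 ^ n * t₀ := fun n =>
    le_mul_of_one_le_left ht₀ (one_le_pow₀ one_le_two)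
  have key := le_pow_two_pow_of_le_sq (u := fun n => g (2 ^ n * t₀) / c)
    (fun n => div_nonneg (hg _ (hge n)) hc.le) (fun n => ?_) n
  · simp only [pow_zero, one_mul] at key
    rwa [div_le_iff₀' hc] at key
  · rw [pow_succ', mul_assoc, div_pow, sq c, ← div_div, div_le_div_iff_of_pos_right hc,
      le_div_iff₀ hc]
    linarith [hsq _ (hge n)]

lemma not_eventually_mul_le_sq_of_tendsto_zero {g : ℝ → ℝ} {c : ℝ} (hc : 0 < c)
    (hg : Tendsto g atTop (𝓝 0))
    (hlow : ∀ ε > 0, ∃ m > 0, ∀ s ≥ 0, Real.exp (-s * ε) * m ≤ g s) :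
    ¬ ∀ᶠ t in atTop, c * g (2 * t) ≤ g t ^ 2 := by
  intro hsq
  have hg_nonneg : ∀ s ≥ 0, 0 ≤ g s := fun s hs => by
    obtain ⟨m, hm, hm_le⟩ := hlow 1 one_pos
    exact (by positivity : 0 ≤ Real.exp (-s * 1) * m).trans (hm_le s hs)
  obtain ⟨T, hT⟩ := eventually_atTop.1 hsq
  obtain ⟨t₀, hT_le, ht₀_small, ht₀_pos⟩ := ((eventually_ge_atTop T).and
    ((hg.eventually (ge_mem_nhds (by positivity : 0 < c / 4))).and (eventually_gt_atTop 0))).exists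
  have hdecay (n : ℕ) : g (2 ^ n * t₀) ≤ c * ((1 / 2) ^ 2 ^ n) ^ 2 :=
    calc g (2 ^ n * t₀) ≤ c * (g t₀ / c) ^ 2 ^ n :=
          le_mul_div_pow_two_pow_of_mul_le_sq hc ht₀_pos.le
            (fun s hs => hg_nonneg s (ht₀_pos.le.trans hs)) (fun s hs => hT s (hT_le.trans hs)) n
      _ ≤ c * (1 / 4) ^ 2 ^ n := by
          gcongr c * ?_ ^ _
          · exact div_nonneg (hg_nonneg t₀ ht₀_pos.le) hc.le
          · rwa [div_le_iff₀ hc, one_div_mul_eq_div]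
      _ = c * ((1 / 2) ^ 2 ^ n) ^ 2 := by rw [← pow_mul, pow_mul']; norm_num
  obtain ⟨m, hm, hm_le⟩ := hlow (Real.log 2 / t₀) (div_pos (Real.log_pos one_lt_two) ht₀_pos)
  have hexp (n : ℕ) : Real.exp (-(2 ^ n * t₀) * (Real.log 2 / t₀)) = (1 / 2) ^ 2 ^ n := by
    rw [show -(2 ^ n * t₀) * (Real.log 2 / t₀) = ((2 ^ n : ℕ) : ℝ) * Real.log (1 / 2) by
      rw [one_div, Real.log_inv]; push_cast; field_simp, Real.exp_nat_mul,
      Real.exp_log (by norm_num)]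
  have hm_le_pow (n : ℕ) : m ≤ c * (1 / 2) ^ 2 ^ n := by
    have h := (hm_le _ (by positivity)).trans (hdecay n)
    rw [hexp, sq, ← mul_assoc, mul_comm] at h
    exact le_of_mul_le_mul_right h (by positivity)
  have hlim : Tendsto (fun n : ℕ => c * (1 / 2 : ℝ) ^ 2 ^ n) atTop (𝓝 0) := by
    simpa using ((tendsto_pow_atTop_nhds_zero_of_lt_one (r := (1 / 2 : ℝ)) (by norm_num)
      (by norm_num)).comp (tendsto_pow_atTop_atTop_of_one_lt one_lt_two)).const_mul c
  exact hm.not_ge (ge_of_tendsto' hlim hm_le_pow)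

noncomputable def laplaceTransform (μ : Measure ℝ) (t : ℝ) : ℝ := ∫ x, Real.exp (-t * x) ∂μ

section laplaceTransform

variable {μ : Measure ℝ}

lemma ae_nonneg_of_measure_Iio_zero (h : μ (Iio 0) = 0) : ∀ᵐ x ∂μ, 0 ≤ x := by
  simp only [ae_iff, not_le]
  exact h

lemma exp_neg_mul_le_one {t x : ℝ} (ht : 0 ≤ t) (hx : 0 ≤ x) : Real.exp (-t * x) ≤ 1 :=
  Real.exp_le_one_iff.2 (by nlinarith)

lemma integrable_exp_neg_mul [IsFiniteMeasure μ] (hμ : ∀ᵐ x ∂μ, 0 ≤ x) {t : ℝ} (ht : 0 ≤ t) :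
    Integrable (fun x => Real.exp (-t * x)) μ := by
  refine (integrable_const (1 : ℝ)).mono' (by fun_prop) ?_
  filter_upwards [hμ] with x hx
  rw [Real.norm_of_nonneg (Real.exp_pos _).le]
  exact exp_neg_mul_le_one ht hx

lemma exp_neg_mul_mul_measureReal_Ico_le_laplaceTransform [IsFiniteMeasure μ]
    (hμ : ∀ᵐ x ∂μ, 0 ≤ x) {t ε : ℝ} (ht : 0 ≤ t) :
    Real.exp (-t * ε) * μ.real (Ico 0 ε) ≤ laplaceTransform μ t := by
  have hint := integrable_exp_neg_mul hμ ht
  calc Real.exp (-t * ε) * μ.real (Ico 0 ε)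
      ≤ ∫ x in Ico 0 ε, Real.exp (-t * x) ∂μ := by
        rw [mul_comm, ← smul_eq_mul]
        refine setIntegral_ge_of_const_le measurableSet_Ico (measure_ne_top μ _) (fun x hx => ?_)
          hint.integrableOn
        exact Real.exp_le_exp.2 (by nlinarith [hx.2])
    _ ≤ laplaceTransform μ t :=
        setIntegral_le_integral hint (Eventually.of_forall fun x => (Real.exp_pos _).le)

lemma tendsto_laplaceTransform_atTop [IsFiniteMeasure μ] (hμ : ∀ᵐ x ∂μ, 0 ≤ x) :
    Tendsto (laplaceTransform μ) atTop (𝓝 (μ.real {0})) := by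
  have hlim : ∀ᵐ x ∂μ, Tendsto (fun t => Real.exp (-t * x)) atTop
      (𝓝 (({0} : Set ℝ).indicator 1 x)) := by
    filter_upwards [hμ] with x hx
    rcases hx.eq_or_lt with rfl | hx
    · simp
    · rw [indicator_of_notMem (show x ∉ ({0} : Set ℝ) from hx.ne')]
      have hlin : Tendsto (fun t => t * x) atTop atTop := tendsto_id.atTop_mul_const hx
      simp only [neg_mul]
      exact Real.tendsto_exp_atBot.comp (tendsto_neg_atBot_iff.2 hlin)
  rw [← integral_indicator_one (measurableSet_singleton 0)]
  refine tendsto_integral_filter_of_dominated_convergence (fun _ => (1 : ℝ))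
    (Eventually.of_forall fun t => by fun_prop) ?_ (integrable_const 1) hlim
  filter_upwards [eventually_ge_atTop (0 : ℝ)] with t ht
  filter_upwards [hμ] with x hx
  rw [Real.norm_of_nonneg (Real.exp_pos _).le]
  exact exp_neg_mul_le_one ht hx

lemma laplaceTransform_nonneg (t : ℝ) : 0 ≤ laplaceTransform μ t :=
  integral_nonneg fun _ => (Real.exp_pos _).le

lemma liminf_laplaceTransform_div_sqrt_le_zero [IsFiniteMeasure μ] (hμ : ∀ᵐ x ∂μ, 0 ≤ x)
    (hpos : ∀ ε > 0, 0 < μ (Ico 0 ε)) (h0 : μ {0} = 0) :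
    liminf (fun t => laplaceTransform μ t / √(laplaceTransform μ (2 * t))) atTop ≤ 0 := by
  by_contra! hlim
  obtain ⟨δ, hδ, hδ_lt⟩ := exists_between hlim
  have hbdd : IsBoundedUnder (· ≥ ·) atTop
      (fun t => laplaceTransform μ t / √(laplaceTransform μ (2 * t))) :=
    isBoundedUnder_of ⟨0, fun t => div_nonneg (laplaceTransform_nonneg t) (Real.sqrt_nonneg _)⟩
  have hsq : ∀ᶠ t in atTop, δ ^ 2 * laplaceTransform μ (2 * t) ≤ laplaceTransform μ t ^ 2 :=
    (eventually_lt_of_lt_liminf hδ_lt hbdd).mono fun t ht =>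
      sq_mul_le_sq_of_lt_div_sqrt hδ.le (laplaceTransform_nonneg _) ht
  refine not_eventually_mul_le_sq_of_tendsto_zero (pow_pos hδ 2) ?_ (fun ε hε => ?_) hsq
  · simpa [measureReal_def, h0] using tendsto_laplaceTransform_atTop hμ
  · exact ⟨μ.real (Ico 0 ε), ENNReal.toReal_pos (hpos ε hε).ne' (measure_ne_top _ _),
      fun s hs => exp_neg_mul_mul_measureReal_Ico_le_laplaceTransform hμ hs⟩

lemma liminf_laplaceTransform_div_sqrt_pos [IsFiniteMeasure μ] (hμ : ∀ᵐ x ∂μ, 0 ≤ x)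
    (h0 : 0 < μ {0}) :
    0 < liminf (fun t => laplaceTransform μ t / √(laplaceTransform μ (2 * t))) atTop := by
  have hc : 0 < μ.real {0} := ENNReal.toReal_pos h0.ne' (measure_ne_top _ _)
  have hL := tendsto_laplaceTransform_atTop hμ
  have hL2 : Tendsto (fun t => laplaceTransform μ (2 * t)) atTop (𝓝 (μ.real {0})) :=
    hL.comp (tendsto_id.const_mul_atTop two_pos)
  have hratio : Tendsto (fun t => laplaceTransform μ t / √(laplaceTransform μ (2 * t)))
      atTop (𝓝 (μ.real {0} / √(μ.real {0}))) :=
    hL.div hL2.sqrt (Real.sqrt_pos.2 hc).ne'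
  rw [hratio.liminf_eq]
  positivity

end laplaceTransform

theorem laplace_liminf_pos_iff_atom_general (μ : Measure ℝ) [IsFiniteMeasure μ]
    (hsupp_nonneg : μ (Set.Iio 0) = 0)
    (hsupp_inf : ∀ ε : ℝ, 0 < ε → 0 < μ (Set.Ico 0 ε)) :
    (0 < Filter.liminf (fun t : ℝ =>
        (∫ x, Real.exp (-t * x) ∂μ) / (∫ x, Real.exp (-2 * t * x) ∂μ) ^ ((1 : ℝ) / 2))
      Filter.atTop) ↔ 0 < μ {0} := by
  have hμ := ae_nonneg_of_measure_Iio_zero hsupp_nonneg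
  have hratio : (fun t : ℝ =>
      (∫ x, Real.exp (-t * x) ∂μ) / (∫ x, Real.exp (-2 * t * x) ∂μ) ^ ((1 : ℝ) / 2)) =
      fun t => laplaceTransform μ t / √(laplaceTransform μ (2 * t)) := by
    ext t
    simp only [laplaceTransform, Real.sqrt_eq_rpow, neg_mul]
  rw [hratio]
  refine ⟨fun hlim => pos_iff_ne_zero.2 fun h0 => ?_, liminf_laplaceTransform_div_sqrt_pos hμ⟩
  exact hlim.not_ge (liminf_laplaceTransform_div_sqrt_le_zero hμ hsupp_inf h0)

/-- Let `μ` be a finite regular Borel measure on `ℝ` with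
`inf supp μ = 0` (i.e. `μ` gives no mass to `(-∞,0)` and every interval `[0,ε)`
has positive mass).  Then
`liminf_{t→∞} (∫ e^{-tx} μ(dx)) / (∫ e^{-2tx} μ(dx))^{1/2} > 0` iff `μ({0}) > 0`. -/
theorem laplace_liminf_pos_iff_atom (μ : Measure ℝ) [IsFiniteMeasure μ] (hreg : μ.Regular)
    (hsupp_nonneg : μ (Set.Iio 0) = 0)
    (hsupp_inf : ∀ ε : ℝ, 0 < ε → 0 < μ (Set.Ico 0 ε)) :
    (0 < Filter.liminf (fun t : ℝ =>
        (∫ x, Real.exp (-t * x) ∂μ) / (∫ x, Real.exp (-2 * t * x) ∂μ) ^ ((1 : ℝ) / 2))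
      Filter.atTop) ↔ 0 < μ {0} :=
  laplace_liminf_pos_iff_atom_general μ hsupp_nonneg hsupp_inf
end

section
/- Let X be a standard d-dimensional Gaussian random vector, X ~ N(0, I_{d×d}). Then for all σ ∈ [1,2], every R > 0, and every z ∈ ℝ^d, P(‖X + z‖ ≤ R) ≤ 2^{d/2} · P(‖√σ · X + z‖ ≤ R). -/
open MeasureTheory ProbabilityTheory
open scoped ENNReal NNReal Real

/-!
For `1 ≤ σ`, the density of `N(0, 1)` is pointwise at most `√σ` times the density of `N(0, σ)`:
the normalising constants differ by exactly `√σ`, and the exponential factor only grows with the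
variance. Taking products, `N(0, 1)^⊗d ≤ (√σ)^d • N(0, σ)^⊗d` as measures, and `(√σ)^d ≤ 2^{d/2}`.
The event `‖√σ X + z‖ ≤ R` is the event `‖Y + z‖ ≤ R` for `Y = √σ X ~ N(0, σ I)`.
-/

namespace MeasureTheory.Measure

variable {ι : Type*} [Fintype ι] {α : ι → Type*} [∀ i, MeasurableSpace (α i)]

theorem pi_mono {μ ν : ∀ i, Measure (α i)} (h : ∀ i, μ i ≤ ν i) :
    Measure.pi μ ≤ Measure.pi ν := by
  refine Measure.le_iff.2 fun s hs => ?_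
  rw [Measure.pi_def, Measure.pi_def, toMeasure_apply _ _ hs, toMeasure_apply _ _ hs]
  refine OuterMeasure.le_pi.2 (fun t _ => (OuterMeasure.pi_pi_le _ t).trans ?_) s
  exact Finset.prod_le_prod' fun i _ => h i _

theorem pi_const_smul (c : ℝ≥0) (μ : ∀ i, Measure (α i)) [∀ i, SigmaFinite (μ i)] :
    Measure.pi (fun i => c • μ i) = c ^ Fintype.card ι • Measure.pi μ := by
  refine Measure.pi_eq fun s _ => ?_
  simp only [Measure.smul_apply, Measure.pi_pi, Finset.prod_mul_distrib, Finset.prod_const,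
    Finset.card_univ, smul_eq_mul, ENNReal.smul_def, ENNReal.coe_pow]

end MeasureTheory.Measure

namespace ProbabilityTheory

theorem gaussianPDFReal_le_sqrt_div_mul (m x : ℝ) {v w : ℝ≥0} (hv : 0 < v) (hvw : v ≤ w) :
    gaussianPDFReal m v x ≤ √(w / v) * gaussianPDFReal m w x := by
  have hv' : (0 : ℝ) < v := hv
  have hw' : (0 : ℝ) < w := hv.trans_le hvw
  have hcoef : (√(2 * π * v))⁻¹ = √(w / v) * (√(2 * π * w))⁻¹ := by
    rw [← Real.sqrt_inv, ← Real.sqrt_inv, ← Real.sqrt_mul (by positivity)]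
    congr 1
    field_simp
  have hexp : rexp (-(x - m) ^ 2 / (2 * v)) ≤ rexp (-(x - m) ^ 2 / (2 * w)) := by
    rw [Real.exp_le_exp, neg_div, neg_div, neg_le_neg_iff]
    gcongr
  rw [gaussianPDFReal, gaussianPDFReal, hcoef, mul_assoc]
  gcongr

theorem gaussianReal_le_sqrt_div_smul (m : ℝ) {v w : ℝ≥0} (hv : 0 < v) (hvw : v ≤ w) :
    gaussianReal m v ≤ NNReal.sqrt (w / v) • gaussianReal m w := by
  rw [gaussianReal_of_var_ne_zero _ hv.ne', gaussianReal_of_var_ne_zero _ (hv.trans_le hvw).ne',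
    ← Measure.coe_nnreal_smul, ← withDensity_smul _ (measurable_gaussianPDF m w)]
  refine withDensity_mono (Filter.Eventually.of_forall fun x => ?_)
  simp only [gaussianPDF, Pi.smul_apply, smul_eq_mul]
  rw [← ENNReal.ofReal_coe_nnreal, ← ENNReal.ofReal_mul (by positivity), Real.coe_sqrt,
    NNReal.coe_div]
  exact ENNReal.ofReal_le_ofReal (gaussianPDFReal_le_sqrt_div_mul m x hv hvw)

variable {ι : Type*} [Fintype ι]

theorem measurePreserving_sqrt_mul_pi_gaussianReal (m : ℝ) (s v : ℝ≥0) :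
    MeasurePreserving (fun (x : ι → ℝ) i => √s * x i) (Measure.pi fun _ => gaussianReal m v)
      (Measure.pi fun _ => gaussianReal (√s * m) (s * v)) := by
  refine measurePreserving_pi _ _ fun _ => ⟨measurable_const_mul _, ?_⟩
  rw [gaussianReal_map_const_mul]
  congr 2
  ext
  simp

theorem pi_gaussianReal_le_sqrt_div_pow_smul (m : ℝ) {v w : ℝ≥0} (hv : 0 < v) (hvw : v ≤ w) :
    Measure.pi (fun _ : ι => gaussianReal m v)
      ≤ NNReal.sqrt (w / v) ^ Fintype.card ι • Measure.pi fun _ : ι => gaussianReal m w := by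
  rw [← Measure.pi_const_smul]
  exact Measure.pi_mono fun _ => gaussianReal_le_sqrt_div_smul m hv hvw

end ProbabilityTheory

theorem gaussian_shift_scale_bound_general (d : ℕ) (σ : ℝ) (hσ : σ ∈ Set.Icc (1 : ℝ) 2)
    (R : ℝ) (z : Fin d → ℝ) :
    (Measure.pi fun _ : Fin d => gaussianReal 0 1)
        {x : Fin d → ℝ | Real.sqrt (∑ i, (x i + z i) ^ 2) ≤ R}
      ≤ ENNReal.ofReal ((2 : ℝ) ^ ((d : ℝ) / 2)) *
        (Measure.pi fun _ : Fin d => gaussianReal 0 1)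
          {x : Fin d → ℝ | Real.sqrt (∑ i, (Real.sqrt σ * x i + z i) ^ 2) ≤ R} := by
  obtain ⟨hσ1, hσ2⟩ := hσ
  lift σ to ℝ≥0 using zero_le_one.trans hσ1
  set B := {x : Fin d → ℝ | Real.sqrt (∑ i, (x i + z i) ^ 2) ≤ R}
  have hB : MeasurableSet B := measurableSet_le (by fun_prop) measurable_const
  have hscale : (Measure.pi fun _ : Fin d => gaussianReal 0 1)
      {x : Fin d → ℝ | Real.sqrt (∑ i, (Real.sqrt σ * x i + z i) ^ 2) ≤ R}
      = (Measure.pi fun _ : Fin d => gaussianReal 0 σ) B := by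
    have hT := measurePreserving_sqrt_mul_pi_gaussianReal (ι := Fin d) 0 σ 1
    rw [mul_zero, mul_one] at hT
    exact hT.measure_preimage hB.nullMeasurableSet
  have hcompare : (Measure.pi fun _ : Fin d => gaussianReal 0 1) B
      ≤ NNReal.sqrt σ ^ d * (Measure.pi fun _ : Fin d => gaussianReal 0 σ) B := by
    simpa using pi_gaussianReal_le_sqrt_div_pow_smul (ι := Fin d) 0 one_pos hσ1 B
  have hconst : (NNReal.sqrt σ ^ d : ℝ≥0∞) ≤ ENNReal.ofReal (2 ^ ((d : ℝ) / 2)) := by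
    rw [Real.rpow_div_two_eq_sqrt _ zero_le_two, Real.rpow_natCast,
      ENNReal.ofReal_pow (Real.sqrt_nonneg 2), ← ENNReal.ofReal_coe_nnreal, Real.coe_sqrt]
    gcongr
  rw [hscale]
  exact hcompare.trans (by gcongr)

/-- Let `X ~ N(0, I_{d×d})` be a standard `d`-dimensional Gaussian
(realized as the product of `d` standard Gaussians on `Fin d → ℝ`).  For all
`σ ∈ [1,2]`, `R > 0` and `z ∈ ℝ^d`,
`P(‖X + z‖ ≤ R) ≤ 2^{d/2} · P(‖√σ·X + z‖ ≤ R)`, with the Euclidean norm. -/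
theorem gaussian_shift_scale_bound (d : ℕ) (σ : ℝ) (hσ : σ ∈ Set.Icc (1 : ℝ) 2)
    (R : ℝ) (hR : 0 < R) (z : Fin d → ℝ) :
    (Measure.pi fun _ : Fin d => gaussianReal 0 1)
        {x : Fin d → ℝ | Real.sqrt (∑ i, (x i + z i) ^ 2) ≤ R}
      ≤ ENNReal.ofReal ((2 : ℝ) ^ ((d : ℝ) / 2)) *
        (Measure.pi fun _ : Fin d => gaussianReal 0 1)
          {x : Fin d → ℝ | Real.sqrt (∑ i, (Real.sqrt σ * x i + z i) ^ 2) ≤ R} :=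
  gaussian_shift_scale_bound_general d σ hσ R z
end

section
/- Let V(x) = -1_{[0,r]}(‖x‖) and suppose the Schrödinger operator H = -Δ/2 + δV on L²(ℝ^d) has a strictly positive normalized ground state ξ₀ with ground state energy E₀ < 0. Then there exists c > 0 such that for all sufficiently large T, E[exp(-δ ∫₀^T V(x_s) ds)] ≥ e^{cT}, where E is expectation with respect to Wiener measure started at 0. Moreover c can be taken equal to |E₀|/2. -/
open MeasureTheory ProbabilityTheory Filter intervalIntegral

/-- Euclidean norm on `Fin d → ℝ`. -/
noncomputable def eucNorm {d : ℕ} (v : Fin d → ℝ) : ℝ :=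
  Real.sqrt (∑ i, v i ^ 2)

/-- A standard `d`-dimensional Brownian motion under the probability measure `P`. -/
structure IsStdBrownianMotion (d : ℕ) {Ω : Type*} [MeasurableSpace Ω]
    (P : Measure Ω) (B : ℝ → Ω → Fin d → ℝ) : Prop where
  meas : ∀ t : ℝ, Measurable (B t)
  init : ∀ᵐ ω ∂P, B 0 ω = 0
  cont : ∀ᵐ ω ∂P, Continuous fun t => B t ω
  incr_law : ∀ (i : Fin d) (s t : ℝ), 0 ≤ s → s ≤ t →
    Measure.map (fun ω => B t ω i - B s ω i) P = gaussianReal 0 ((t - s).toNNReal)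
  incr_indep : ∀ (s₁ t₁ s₂ t₂ : ℝ) (i j : Fin d),
    0 ≤ s₁ → s₁ ≤ t₁ → t₁ ≤ s₂ → s₂ ≤ t₂ →
    IndepFun (fun ω => B t₁ ω i - B s₁ ω i) (fun ω => B t₂ ω j - B s₂ ω j) P
  coord_indep : ∀ s t : ℝ, 0 ≤ s → s ≤ t →
    iIndepFun (m := fun _ : Fin d => inferInstance) (fun (i : Fin d) ω => B t ω i - B s ω i) P

/-- The potential well `V = -1_{[0,r]}(‖x‖)`. -/
noncomputable def wellPotential {d : ℕ} (r : ℝ) (u : Fin d → ℝ) : ℝ :=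
  if eucNorm u ≤ r then -1 else 0

open scoped NNReal

/-! The ground state is bounded: the eigen relation at `t = 1` gives
`e^{-E₀} ξ₀(z) ≤ e^{|δ|} E[ξ₀(z + B₁)]`, and since the law of `z + B₁` has density at most `1`
with respect to Lebesgue measure, `E[ξ₀(z + B₁)] ≤ (1 + ‖ξ₀‖₂²) / 2 = 1`. Hence
`ξ₀ ≤ M := e^{E₀ + |δ|}`. The eigen relation at `z = 0` then reads
`e^{T|E₀|} ξ₀(0) = E[e^{-δ∫₀^T V} ξ₀(B_T)] ≤ M E[e^{-δ∫₀^T V}]`, and the constant `ξ₀(0) / M`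
is absorbed by halving the rate. -/

lemma abs_wellPotential_le_one {d : ℕ} (r : ℝ) (u : Fin d → ℝ) : |wellPotential r u| ≤ 1 := by
  unfold wellPotential; split_ifs <;> norm_num

lemma exp_neg_mul_integral_wellPotential_le {d : ℕ} (δ r : ℝ) (g : ℝ → Fin d → ℝ) (T : ℝ) :
    Real.exp (-δ * ∫ s in (0 : ℝ)..T, wellPotential r (g s)) ≤ Real.exp (|δ| * |T|) := by
  have hV : |∫ s in (0 : ℝ)..T, wellPotential r (g s)| ≤ |T| := by
    simpa using norm_integral_le_of_norm_le_const (a := 0) (b := T) (C := 1)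
      (f := fun s => wellPotential r (g s)) fun s _ => abs_wellPotential_le_one r (g s)
  refine Real.exp_le_exp.2 ((le_abs_self _).trans ?_)
  rw [abs_mul, abs_neg]
  exact mul_le_mul_of_nonneg_left hV (abs_nonneg δ)

lemma gaussianPDF_le_one (μ : ℝ) {v : ℝ≥0} (hv : 1 ≤ v) (x : ℝ) : gaussianPDF μ v x ≤ 1 := by
  rw [gaussianPDF, ENNReal.ofReal_le_one, gaussianPDFReal]
  have hsqrt : 1 ≤ Real.sqrt (2 * Real.pi * v) := by
    have : (1 : ℝ) ≤ v := by exact_mod_cast hv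
    exact Real.one_le_sqrt.2 (by nlinarith [Real.pi_gt_three])
  refine mul_le_one₀ (inv_le_one_of_one_le₀ hsqrt) (Real.exp_nonneg _) ?_
  rw [Real.exp_le_one_iff]
  exact div_nonpos_of_nonpos_of_nonneg (neg_nonpos.2 (sq_nonneg _)) (by positivity)

lemma gaussianReal_le_volume (μ : ℝ) {v : ℝ≥0} (hv : 1 ≤ v) : gaussianReal μ v ≤ volume := by
  rw [gaussianReal_of_var_ne_zero μ (zero_lt_one.trans_le hv).ne']
  calc volume.withDensity (gaussianPDF μ v) ≤ volume.withDensity 1 :=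
        withDensity_mono (ae_of_all _ (gaussianPDF_le_one μ hv))
    _ = volume := withDensity_one

lemma MeasureTheory.Measure.pi_mono_s14 {ι : Type*} [Fintype ι] {α : ι → Type*}
    [∀ i, MeasurableSpace (α i)] {μ ν : ∀ i, Measure (α i)} [∀ i, SigmaFinite (μ i)]
    [∀ i, SigmaFinite (ν i)] (h : ∀ i, μ i ≤ ν i) : Measure.pi μ ≤ Measure.pi ν := by
  have hout : OuterMeasure.pi (fun i => (μ i).toOuterMeasure)
      ≤ OuterMeasure.pi fun i => (ν i).toOuterMeasure := by
    rw [OuterMeasure.le_pi]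
    exact fun s _ => (OuterMeasure.pi_pi_le _ s).trans
      (Finset.prod_le_prod' fun i _ => Measure.le_iff'.1 (h i) (s i))
  refine Measure.le_iff.2 fun s hs => ?_
  rw [Measure.pi_def, Measure.pi_def, toMeasure_apply _ _ hs, toMeasure_apply _ _ hs]
  exact hout s

lemma memLp_two_of_nonneg_of_integral_sq_ne_zero {α : Type*} [MeasurableSpace α] {μ : Measure α}
    {f : α → ℝ} (hf : ∀ x, 0 ≤ f x) (h : ∫ x, f x ^ 2 ∂μ ≠ 0) : MemLp f 2 μ := by
  have hsq : Integrable (fun x => f x ^ 2) μ := Integrable.of_integral_ne_zero h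
  have hmeas : AEStronglyMeasurable f μ := by
    have hsqrt : f = fun x => Real.sqrt (f x ^ 2) := funext fun x => (Real.sqrt_sq (hf x)).symm
    rw [hsqrt]
    exact Real.continuous_sqrt.comp_aestronglyMeasurable hsq.aestronglyMeasurable
  exact (memLp_two_iff_integrable_sq hmeas).2 hsq

/-- AM–GM `f ≤ (1 + f²) / 2`, integrated. -/
lemma integral_le_of_le_of_memLp_two {α : Type*} [MeasurableSpace α] {μ ν : Measure α}
    [IsProbabilityMeasure μ] (hμν : μ ≤ ν) {f : α → ℝ} (hf : MemLp f 2 ν) :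
    ∫ x, f x ∂μ ≤ (1 + ∫ x, f x ^ 2 ∂ν) / 2 := by
  have hsqν : Integrable (fun x => f x ^ 2) ν := hf.integrable_sq
  have hsqμ : Integrable (fun x => f x ^ 2) μ := hsqν.mono_measure hμν
  have hfμ : Integrable f μ := (hf.mono_measure hμν).integrable one_le_two
  calc ∫ x, f x ∂μ ≤ ∫ x, (1 + f x ^ 2) / 2 ∂μ :=
        integral_mono hfμ (((integrable_const 1).add hsqμ).div_const 2)
          fun x => by nlinarith [sq_nonneg (f x - 1)]
    _ = (1 + ∫ x, f x ^ 2 ∂μ) / 2 := by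
        rw [MeasureTheory.integral_div, integral_add (integrable_const 1) hsqμ,
          MeasureTheory.integral_const]
        simp
    _ ≤ (1 + ∫ x, f x ^ 2 ∂ν) / 2 := by
        have := integral_mono_measure hμν (ae_of_all _ fun x => sq_nonneg (f x)) hsqν
        linarith

lemma eventually_exp_half_mul_le {f : ℝ → ℝ} {a c : ℝ} (ha : 0 < a) (hc : 0 < c)
    (h : ∀ᶠ T in atTop, a * Real.exp (c * T) ≤ f T) :
    ∀ᶠ T in atTop, Real.exp (c / 2 * T) ≤ f T := by
  have hlarge : ∀ᶠ T in atTop, a⁻¹ ≤ Real.exp (c / 2 * T) :=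
    (Real.tendsto_exp_atTop.comp
      (tendsto_id.const_mul_atTop (half_pos hc))).eventually_ge_atTop a⁻¹
  filter_upwards [h, hlarge] with T hT hTlarge
  calc Real.exp (c / 2 * T) = 1 * Real.exp (c / 2 * T) := (one_mul _).symm
    _ ≤ a * Real.exp (c / 2 * T) * Real.exp (c / 2 * T) := by
        gcongr
        exact (inv_le_iff_one_le_mul₀' ha).1 hTlarge
    _ = a * Real.exp (c * T) := by rw [mul_assoc, ← Real.exp_add]; ring_nf
    _ ≤ f T := hT

namespace IsStdBrownianMotion

variable {d : ℕ} {Ω : Type*} [MeasurableSpace Ω] {P : Measure Ω} {B : ℝ → Ω → Fin d → ℝ}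

lemma map_eq_pi (hB : IsStdBrownianMotion d P B) {T : ℝ} (hT : 0 ≤ T) :
    P.map (B T) = Measure.pi fun _ => gaussianReal 0 T.toNNReal := by
  have hincr : ∀ i : Fin d, Measurable fun ω => B T ω i - B 0 ω i := fun i =>
    ((measurable_pi_apply i).comp (hB.meas T)).sub ((measurable_pi_apply i).comp (hB.meas 0))
  have hstart : (fun ω i => B T ω i - B 0 ω i) =ᵐ[P] B T := by
    filter_upwards [hB.init] with ω hω
    simp [hω]
  rw [← Measure.map_congr hstart, (hB.coord_indep 0 T le_rfl hT).map_fun_eq_pi_map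
    fun i => (hincr i).aemeasurable]
  congr 1
  funext i
  rw [hB.incr_law i 0 T le_rfl hT, sub_zero]

lemma map_le_volume (hB : IsStdBrownianMotion d P B) {T : ℝ} (hT : 1 ≤ T) :
    P.map (B T) ≤ volume := by
  rw [hB.map_eq_pi (zero_le_one.trans hT), volume_pi]
  exact Measure.pi_mono_s14 fun _ => gaussianReal_le_volume 0 (by simpa using Real.toNNReal_mono hT)

lemma map_const_add_le_volume (hB : IsStdBrownianMotion d P B) {T : ℝ} (hT : 1 ≤ T)
    (z : Fin d → ℝ) : P.map (fun ω => z + B T ω) ≤ volume := by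
  calc P.map (fun ω => z + B T ω) = (P.map (B T)).map (z + ·) :=
        (Measure.map_map (measurable_const_add z) (hB.meas T)).symm
    _ ≤ volume.map (z + ·) :=
        Measure.map_mono (hB.map_le_volume hT) (measurable_const_add z)
    _ = volume := map_add_left_eq_self volume z

end IsStdBrownianMotion

/-- The Feynman–Kac form of the eigenvalue equation `(-Δ/2 + δ V) ξ = E ξ` with
`V = wellPotential r`. -/
def IsFeynmanKacEigenfunction {d : ℕ} {Ω : Type*} [MeasurableSpace Ω] (P : Measure Ω)
    (B : ℝ → Ω → Fin d → ℝ) (δ r : ℝ) (ξ : (Fin d → ℝ) → ℝ) (E : ℝ) : Prop :=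
  ∀ t : ℝ, 0 ≤ t → ∀ z : Fin d → ℝ,
    ∫ ω, Real.exp (-δ * ∫ s in (0 : ℝ)..t, wellPotential r fun j => z j + B s ω j) *
        ξ (fun j => z j + B t ω j) ∂P
      = Real.exp (-t * E) * ξ z

namespace IsFeynmanKacEigenfunction

variable {d : ℕ} {Ω : Type*} [MeasurableSpace Ω] {P : Measure Ω} [IsProbabilityMeasure P]
  {B : ℝ → Ω → Fin d → ℝ} {δ r E : ℝ} {ξ : (Fin d → ℝ) → ℝ}

lemma le_exp_add_abs (h : IsFeynmanKacEigenfunction P B δ r ξ E)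
    (hB : IsStdBrownianMotion d P B) (hξ : ∀ u, 0 ≤ ξ u) (hξ2 : MemLp ξ 2 volume)
    (hnorm : ∫ u, ξ u ^ 2 = 1) (z : Fin d → ℝ) : ξ z ≤ Real.exp (E + |δ|) := by
  have hle := hB.map_const_add_le_volume le_rfl z
  have hZ : AEMeasurable (fun ω => z + B 1 ω) P :=
    ((measurable_const_add z).comp (hB.meas 1)).aemeasurable
  have hξ_meas := hξ2.aestronglyMeasurable.mono_ac hle.absolutelyContinuous
  have : IsProbabilityMeasure (P.map fun ω => z + B 1 ω) := Measure.isProbabilityMeasure_map hZ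
  have hint : Integrable (fun ω => ξ (z + B 1 ω)) P :=
    (integrable_map_measure hξ_meas hZ).1 ((hξ2.mono_measure hle).integrable one_le_two)
  have hmean : ∫ ω, ξ (z + B 1 ω) ∂P ≤ 1 := by
    rw [← integral_map hZ hξ_meas]
    simpa [hnorm] using integral_le_of_le_of_memLp_two hle hξ2
  have hweight : ∀ ω, Real.exp (-δ * ∫ s in (0 : ℝ)..1, wellPotential r fun j => z j + B s ω j)
      ≤ Real.exp |δ| := fun ω => by
    simpa using exp_neg_mul_integral_wellPotential_le δ r (fun s j => z j + B s ω j) 1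
  have hbound : Real.exp (-1 * E) * ξ z ≤ Real.exp |δ| := by
    rw [← h 1 zero_le_one z]
    calc _ ≤ ∫ ω, Real.exp |δ| * ξ (z + B 1 ω) ∂P :=
          integral_mono_of_nonneg
            (ae_of_all _ fun ω => mul_nonneg (Real.exp_pos _).le (hξ _))
            (hint.const_mul _)
            (ae_of_all _ fun ω => mul_le_mul_of_nonneg_right (hweight ω) (hξ _))
      _ = Real.exp |δ| * ∫ ω, ξ (z + B 1 ω) ∂P := integral_const_mul _ _
      _ ≤ Real.exp |δ| := mul_le_of_le_one_right (Real.exp_pos _).le hmean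
  calc ξ z = Real.exp E * (Real.exp (-1 * E) * ξ z) := by
        rw [← mul_assoc, ← Real.exp_add]; simp
    _ ≤ Real.exp E * Real.exp |δ| := by gcongr
    _ = Real.exp (E + |δ|) := (Real.exp_add _ _).symm

lemma exp_mul_le_mul_integral (h : IsFeynmanKacEigenfunction P B δ r ξ E)
    (hB : IsStdBrownianMotion d P B) (hξ : ∀ u, 0 < ξ u)
    (hξ_meas : AEStronglyMeasurable ξ volume) {M : ℝ} (hM : ∀ u, ξ u ≤ M) {T : ℝ} (hT : 1 ≤ T) :
    Real.exp (-T * E) * ξ 0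
      ≤ M * ∫ ω, Real.exp (-δ * ∫ s in (0 : ℝ)..T, wellPotential r (B s ω)) ∂P := by
  have key := h T (zero_le_one.trans hT) 0
  simp only [Pi.zero_apply, zero_add] at key
  set F : Ω → ℝ := fun ω => Real.exp (-δ * ∫ s in (0 : ℝ)..T, wellPotential r (B s ω))
  have hFξ : Integrable (fun ω => F ω * ξ (B T ω)) P :=
    Integrable.of_integral_ne_zero (by rw [key]; exact (mul_pos (Real.exp_pos _) (hξ 0)).ne')
  have hξB : AEStronglyMeasurable (fun ω => ξ (B T ω)) P :=
    (hξ_meas.mono_ac (hB.map_le_volume hT).absolutelyContinuous).comp_aemeasurable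
      (hB.meas T).aemeasurable
  -- `ω ↦ ∫₀^T V(B_s ω) ds` need not be measurable (`B` is not assumed jointly measurable),
  -- so `F` is recovered from the integrable `F · ξ(B_T)`.
  have hF_meas : AEStronglyMeasurable F P := by
    have hdiv : F = fun ω => F ω * ξ (B T ω) / ξ (B T ω) :=
      funext fun ω => (mul_div_cancel_right₀ _ (hξ _).ne').symm
    rw [hdiv]
    exact hFξ.aestronglyMeasurable.div₀ hξB
  have hF : Integrable F P :=
    (integrable_const (Real.exp (|δ| * |T|))).mono' hF_meas (ae_of_all _ fun ω => by
      rw [Real.norm_of_nonneg (Real.exp_pos _).le]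
      exact exp_neg_mul_integral_wellPotential_le δ r (fun s => B s ω) T)
  calc Real.exp (-T * E) * ξ 0 = ∫ ω, F ω * ξ (B T ω) ∂P := key.symm
    _ ≤ ∫ ω, M * F ω ∂P := integral_mono hFξ (hF.const_mul M) fun ω => by
        rw [mul_comm M]
        exact mul_le_mul_of_nonneg_left (hM _) (Real.exp_pos _).le
    _ = M * ∫ ω, F ω ∂P := integral_const_mul _ _

end IsFeynmanKacEigenfunction

theorem feynman_kac_exponential_growth_general (d : ℕ) {Ω : Type*}
    [MeasurableSpace Ω] (P : Measure Ω) [IsProbabilityMeasure P]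
    (B : ℝ → Ω → Fin d → ℝ) (hB : IsStdBrownianMotion d P B)
    (δ r : ℝ)
    (ξ₀ : (Fin d → ℝ) → ℝ) (hpos : ∀ u, 0 < ξ₀ u)
    (hnorm : (∫ u : Fin d → ℝ, ξ₀ u ^ 2) = 1)
    (E₀ : ℝ) (hE₀ : E₀ < 0)
    (heigen : ∀ t : ℝ, 0 ≤ t → ∀ z : Fin d → ℝ,
      ∫ ω, Real.exp (-δ * ∫ s in (0 : ℝ)..t, wellPotential r fun j => z j + B s ω j) *
          ξ₀ (fun j => z j + B t ω j) ∂P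
        = Real.exp (-t * E₀) * ξ₀ z) :
    (∃ c : ℝ, 0 < c ∧ ∀ᶠ T in atTop,
      Real.exp (c * T)
        ≤ ∫ ω, Real.exp (-δ * ∫ s in (0 : ℝ)..T, wellPotential r (B s ω)) ∂P) ∧
    ∀ᶠ T in atTop,
      Real.exp (|E₀| / 2 * T)
        ≤ ∫ ω, Real.exp (-δ * ∫ s in (0 : ℝ)..T, wellPotential r (B s ω)) ∂P := by
  have hfk : IsFeynmanKacEigenfunction P B δ r ξ₀ E₀ := heigen
  have hξ2 : MemLp ξ₀ 2 volume :=
    memLp_two_of_nonneg_of_integral_sq_ne_zero (fun u => (hpos u).le) (by simp [hnorm])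
  set M := Real.exp (E₀ + |δ|)
  have hM : ∀ u, ξ₀ u ≤ M := hfk.le_exp_add_abs hB (fun u => (hpos u).le) hξ2 hnorm
  have hgrowth : ∀ᶠ T in atTop, ξ₀ 0 / M * Real.exp (|E₀| * T)
      ≤ ∫ ω, Real.exp (-δ * ∫ s in (0 : ℝ)..T, wellPotential r (B s ω)) ∂P := by
    filter_upwards [eventually_ge_atTop 1] with T hT
    calc ξ₀ 0 / M * Real.exp (|E₀| * T) = M⁻¹ * (Real.exp (-T * E₀) * ξ₀ 0) := by
          rw [abs_of_neg hE₀]; ring_nf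
      _ ≤ M⁻¹ * (M * ∫ ω, Real.exp (-δ * ∫ s in (0 : ℝ)..T, wellPotential r (B s ω)) ∂P) :=
          mul_le_mul_of_nonneg_left
            (hfk.exp_mul_le_mul_integral hB hpos hξ2.aestronglyMeasurable hM hT)
            (inv_nonneg.2 (Real.exp_pos _).le)
      _ = _ := inv_mul_cancel_left₀ (Real.exp_pos _).ne' _
  have hE₀_abs : 0 < |E₀| := abs_pos.2 hE₀.ne
  have main := eventually_exp_half_mul_le (div_pos (hpos 0) (Real.exp_pos _)) hE₀_abs hgrowth
  exact ⟨⟨|E₀| / 2, half_pos hE₀_abs, main⟩, main⟩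

/-- exponential growth of the Feynman–Kac expectation.  Suppose
`H = -Δ/2 + δV` with `V = -1_{[0,r]}` has a strictly positive normalized ground state
`ξ₀` with ground state energy `E₀ < 0`, expressed through the Feynman–Kac eigenvalue
relation `E^z[e^{-δ∫₀^t V(x_s)ds} ξ₀(x_t)] = e^{-tE₀} ξ₀(z)`.  Then there exists
`c > 0` with `E[e^{-δ∫₀^T V(x_s)ds}] ≥ e^{cT}` for all large `T`; moreover one can
take `c = |E₀|/2`. -/
theorem feynman_kac_exponential_growth (d : ℕ) (hd : 0 < d) {Ω : Type*}
    [MeasurableSpace Ω] (P : Measure Ω) [IsProbabilityMeasure P]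
    (B : ℝ → Ω → Fin d → ℝ) (hB : IsStdBrownianMotion d P B)
    (δ r : ℝ) (hδ : 0 < δ) (hr : 0 < r)
    (ξ₀ : (Fin d → ℝ) → ℝ) (hpos : ∀ u, 0 < ξ₀ u)
    (hnorm : (∫ u : Fin d → ℝ, ξ₀ u ^ 2) = 1)
    (E₀ : ℝ) (hE₀ : E₀ < 0)
    (heigen : ∀ t : ℝ, 0 ≤ t → ∀ z : Fin d → ℝ,
      ∫ ω, Real.exp (-δ * ∫ s in (0 : ℝ)..t, wellPotential r fun j => z j + B s ω j) *
          ξ₀ (fun j => z j + B t ω j) ∂P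
        = Real.exp (-t * E₀) * ξ₀ z) :
    (∃ c : ℝ, 0 < c ∧ ∀ᶠ T in atTop,
      Real.exp (c * T)
        ≤ ∫ ω, Real.exp (-δ * ∫ s in (0 : ℝ)..T, wellPotential r (B s ω)) ∂P) ∧
    ∀ᶠ T in atTop,
      Real.exp (|E₀| / 2 * T)
        ≤ ∫ ω, Real.exp (-δ * ∫ s in (0 : ℝ)..T, wellPotential r (B s ω)) ∂P :=
  feynman_kac_exponential_growth_general d P B hB δ r ξ₀ hpos hnorm E₀ hE₀ heigen
end
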